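/- For the two-ray population covariance R̄₂ = v vᴴ + I with v = σ₁ a₁ + ρ σ₂ a₂ and a₁ᴴ a₂ = 0, the Log-Euclidean power estimate in direction θ₁ is exactly exp(a₁ᴴ log(R̄₂) a₁) − 1 = (σ₁² + σ₂² + 1)^{σ₁²/(σ₁²+σ₂²)} − 1. -/

import Mathlib

open Matrix Complex

lemma vecMulVec_mulVec' {M : ℕ} (v w x : Fin M → ℂ) :
    Matrix.vecMulVec v w *ᵥ x = (w ⬝ᵥ x) • v := by
  ext i
  simp only [Matrix.mulVec, Matrix.vecMulVec_apply, dotProduct, Pi.smul_apply,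
    smul_eq_mul, Finset.sum_mul]
  exact Finset.sum_congr rfl fun j _ => by ring

lemma herm_exp_eigen {M : ℕ} (L : Matrix (Fin M) (Fin M) ℂ) (hL : L.IsHermitian)
    (x : Fin M → ℂ) (c : ℝ) (hc : 0 < c)
    (h : NormedSpace.exp L *ᵥ x = (c : ℂ) • x) :
    L *ᵥ x = ((Real.log c : ℝ) : ℂ) • x := by
  obtain ⟨U, d, hUmem, hspec⟩ : ∃ (U : Matrix (Fin M) (Fin M) ℂ) (d : Fin M → ℝ),
      U ∈ Matrix.unitaryGroup (Fin M) ℂ ∧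
      L = U * Matrix.diagonal (RCLike.ofReal ∘ d) * star U :=
    ⟨_, _, hL.eigenvectorUnitary.2, hL.spectral_theorem⟩
  have hUs : star U * U = 1 := (Matrix.mem_unitaryGroup_iff').mp hUmem
  have hsU : U * star U = 1 := (Matrix.mem_unitaryGroup_iff).mp hUmem
  have hUinv : U⁻¹ = star U := Matrix.inv_eq_right_inv hsU
  have hUisUnit : IsUnit U := ⟨⟨U, star U, hsU, hUs⟩, rfl⟩
  have hexpL : NormedSpace.exp L =
      U * Matrix.diagonal (fun i => Complex.exp (d i)) * star U := by
    rw [hspec, ← hUinv, Matrix.exp_conj U _ hUisUnit, Matrix.exp_diagonal, hUinv]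
    congr 2
    ext i j
    simp [Matrix.diagonal_apply, Pi.exp_def, Function.comp, Complex.exp_eq_exp_ℂ]
  obtain ⟨y, hy⟩ : ∃ y, y = star U *ᵥ x := ⟨_, rfl⟩
  have hyx : U *ᵥ y = x := by
    rw [hy, Matrix.mulVec_mulVec, hsU, Matrix.one_mulVec]
  have h2 : (U * Matrix.diagonal (fun i => Complex.exp (d i)) * star U) *ᵥ x
      = (c : ℂ) • x := hexpL ▸ h
  have hdiag : Matrix.diagonal (fun i => Complex.exp (d i)) *ᵥ y = (c : ℂ) • y := by
    have h3 := congrArg (fun z => star U *ᵥ z) h2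
    simpa [Matrix.mulVec_mulVec, ← Matrix.mul_assoc, hUs, Matrix.mulVec_smul, hy] using h3
  have hcomp : ∀ i, Complex.exp (d i) * y i = (c : ℂ) * y i := by
    intro i
    have := congrFun hdiag i
    simpa [Matrix.mulVec_diagonal] using this
  have hDy : Matrix.diagonal (RCLike.ofReal ∘ d) *ᵥ y
      = ((Real.log c : ℝ) : ℂ) • y := by
    ext i
    simp only [Matrix.mulVec_diagonal, Function.comp, Pi.smul_apply, smul_eq_mul]
    rcases eq_or_ne (y i) 0 with h0 | h0
    · simp [h0]
    · have hec : Complex.exp (d i) = (c : ℂ) :=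
        mul_right_cancel₀ h0 (hcomp i)
      have hre : Real.exp (d i) = c := by
        have : ((Real.exp (d i) : ℝ) : ℂ) = (c : ℂ) := by
          rw [Complex.ofReal_exp, hec]
        exact_mod_cast this
      have heq : d i = Real.log c := by rw [← hre, Real.log_exp]
      rw [heq]
      norm_num
  have : L *ᵥ x = U *ᵥ (Matrix.diagonal (RCLike.ofReal ∘ d) *ᵥ y) := by
    rw [hspec, hy, Matrix.mulVec_mulVec, Matrix.mulVec_mulVec]
  rw [this, hDy, Matrix.mulVec_smul, hyx]


/-- For the two-ray population covariance R̄₂ = v vᴴ + I with v = σ₁ a₁ + ρ σ₂ a₂ and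
a₁ᴴ a₂ = 0, the Log-Euclidean power estimate in direction θ₁ is exactly
exp(a₁ᴴ log(R̄₂) a₁) − 1 = (σ₁² + σ₂² + 1)^{σ₁²/(σ₁²+σ₂²)} − 1.  Here log(R̄₂) is
represented by a Hermitian matrix `L` with exp L = R̄₂. -/
theorem stmt_19 {M : ℕ} (a₁ a₂ : Fin M → ℂ)
    (ha₁ : star a₁ ⬝ᵥ a₁ = 1) (ha₂ : star a₂ ⬝ᵥ a₂ = 1)
    (horth : star a₁ ⬝ᵥ a₂ = 0)
    (σ₁ σ₂ : ℝ) (hσ₁ : 0 < σ₁) (hσ₂ : 0 < σ₂)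
    (ρ : ℂ) (hρ : ‖ρ‖ = 1)
    (v : Fin M → ℂ) (hv : v = (σ₁ : ℂ) • a₁ + (ρ * σ₂) • a₂)
    (R₂ : Matrix (Fin M) (Fin M) ℂ)
    (hR₂ : R₂ = Matrix.vecMulVec v (star v) + 1)
    (L : Matrix (Fin M) (Fin M) ℂ) (hL : L.IsHermitian)
    (hexp : NormedSpace.exp L = R₂) :
    Real.exp ((star a₁ ⬝ᵥ L *ᵥ a₁).re) - 1 =
      (σ₁ ^ 2 + σ₂ ^ 2 + 1) ^ (σ₁ ^ 2 / (σ₁ ^ 2 + σ₂ ^ 2)) - 1 := by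
  set t : ℝ := σ₁ ^ 2 + σ₂ ^ 2 with ht
  have ht0 : 0 < t := by positivity
  have hρρ : (starRingEnd ℂ) ρ * ρ = 1 := by
    have h1 : Complex.normSq ρ = 1 := by
      rw [← Complex.sq_norm, hρ]; norm_num
    rw [mul_comm, Complex.mul_conj, h1]; norm_num
  have horth' : star a₂ ⬝ᵥ a₁ = 0 := by
    have key : star a₂ ⬝ᵥ a₁ = star (star a₁ ⬝ᵥ a₂) := by
      simp only [dotProduct, star_sum, star_mul', star_star, Pi.star_apply]
      exact Finset.sum_congr rfl fun i _ => mul_comm _ _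
    rw [key, horth, star_zero]
  have hva1 : star v ⬝ᵥ a₁ = (σ₁ : ℂ) := by
    rw [hv]
    simp [star_add, star_smul, add_dotProduct, smul_dotProduct, ha₁, horth',
      Complex.conj_ofReal, smul_eq_mul, _root_.map_mul]
  have ha1v : star a₁ ⬝ᵥ v = (σ₁ : ℂ) := by
    rw [hv]
    simp [dotProduct_add, dotProduct_smul, ha₁, horth, smul_eq_mul]
  have hvv : star v ⬝ᵥ v = (t : ℂ) := by
    rw [hv]
    simp only [star_add, star_smul, add_dotProduct, smul_dotProduct,
      dotProduct_add, dotProduct_smul, ha₁, ha₂, horth, horth',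
      Complex.conj_ofReal, smul_eq_mul, _root_.map_mul, mul_zero, mul_one, add_zero, zero_add,
      Complex.star_def]
    rw [ht]
    push_cast
    linear_combination (σ₂ : ℂ) ^ 2 * hρρ
  have hexpv : NormedSpace.exp L *ᵥ v = (((1 + t : ℝ)) : ℂ) • v := by
    rw [hexp, hR₂, Matrix.add_mulVec, vecMulVec_mulVec', Matrix.one_mulVec, hvv]
    have : ((1 + t : ℝ) : ℂ) = (t : ℂ) + 1 := by push_cast; ring
    rw [this, add_smul, one_smul]
  have hLv : L *ᵥ v = ((Real.log (1 + t) : ℝ) : ℂ) • v :=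
    herm_exp_eigen L hL v (1 + t) (by positivity) hexpv
  set w : Fin M → ℂ := a₁ - ((σ₁ / t : ℝ) : ℂ) • v with hw
  have hvw : star v ⬝ᵥ w = 0 := by
    rw [hw, dotProduct_sub, dotProduct_smul, hva1, hvv, smul_eq_mul]
    push_cast
    field_simp [show (t : ℂ) ≠ 0 from Complex.ofReal_ne_zero.mpr ht0.ne']
    ring
  have hexpw : NormedSpace.exp L *ᵥ w = (((1 : ℝ)) : ℂ) • w := by
    rw [hexp, hR₂, Matrix.add_mulVec, vecMulVec_mulVec', Matrix.one_mulVec, hvw]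
    simp
  have hLw : L *ᵥ w = 0 := by
    have := herm_exp_eigen L hL w 1 one_pos hexpw
    simpa [Real.log_one] using this
  have ha1d : a₁ = w + ((σ₁ / t : ℝ) : ℂ) • v := by
    rw [hw]; abel
  have hLa1 : L *ᵥ a₁ = (((σ₁ / t) * Real.log (1 + t) : ℝ) : ℂ) • v := by
    rw [ha1d, Matrix.mulVec_add, hLw, Matrix.mulVec_smul, hLv, zero_add, smul_smul]
    push_cast
    ring_nf
  have hdot : star a₁ ⬝ᵥ L *ᵥ a₁ = ((((σ₁ / t) * Real.log (1 + t)) * σ₁ : ℝ) : ℂ) := by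
    rw [hLa1, dotProduct_smul, ha1v, smul_eq_mul]
    push_cast
    ring
  rw [hdot, Complex.ofReal_re]
  congr 1
  rw [Real.rpow_def_of_pos (by positivity : (0:ℝ) < σ₁ ^ 2 + σ₂ ^ 2 + 1)]
  congr 1
  rw [show (1 + t) = σ₁ ^ 2 + σ₂ ^ 2 + 1 by rw [ht]; ring]
  rw [ht]
  ring
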